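/- A permutation π is layered if and only if it has no distant inverse-descent, i.e., no pair of indices j, k with k ≥ j + 2 and π(j) = π(k) + 1. -/

import Mathlib

/-- `w` is a permutation of length `n`: a word on `{1,...,n}` with each letter occurring once. -/
def IsPermWord (n : Nat) (w : List Nat) : Prop :=
  w.length = n ∧ w.Nodup ∧ ∀ x ∈ w, 1 ≤ x ∧ x ≤ n

/-- Build a layered word from a list of layer lengths, starting above value `a`:
a layer of length `k` is the decreasing run `a+k, ..., a+2, a+1`. -/
def layeredFrom : Nat → List Nat → List Nat
  | _, [] => []
  | a, k :: ks => ((List.range k).map (fun i => a + k - i)) ++ layeredFrom (a + k) ks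

/-- A permutation (word) is layered if it is a direct sum of nonempty decreasing
permutations. -/
def IsLayered (w : List Nat) : Prop :=
  ∃ ls : List Nat, (∀ l ∈ ls, 0 < l) ∧ w = layeredFrom 0 ls

/-- `π` has a distant inverse-descent: indices j, k with k ≥ j + 2 and π(j) = π(k) + 1. -/
def HasDistantInvDesc (p : List Nat) : Prop :=
  ∃ j k, j + 2 ≤ k ∧ k < p.length ∧ p.getD j 0 = p.getD k 0 + 1

/-!
A layer of length `k` above `a` is `(List.range' (a + 1) k).reverse`. Concatenating layers with
increasing values creates no distant inverse-descent, since inside a layer `x + 1` is always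
immediately followed by `x`. Conversely, if a permutation of `a + 1, …, a + N` starts with
`a + 1 + m`, then `a + m` must sit in the next position (anywhere later would be a distant
inverse-descent, and it cannot come earlier), then `a + m - 1`, and so on down to `a + 1`; so the
permutation begins with a layer, and the rest is a permutation of the remaining values.
-/

theorem HasDistantInvDesc.append_left {v : List ℕ} (h : HasDistantInvDesc v) (u : List ℕ) :
    HasDistantInvDesc (u ++ v) := by
  obtain ⟨j, k, hjk, hk, hjk_eq⟩ := h
  refine ⟨u.length + j, u.length + k, by omega, by simp; omega, ?_⟩
  rwa [List.getD_append_right _ _ _ _ (by omega), List.getD_append_right _ _ _ _ (by omega),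
    Nat.add_sub_cancel_left, Nat.add_sub_cancel_left]

theorem hasDistantInvDesc_cons_cons_of_mem {y x : ℕ} {t : List ℕ} (hy : y ∈ t) :
    HasDistantInvDesc ((y + 1) :: x :: t) := by
  obtain ⟨k, hk, rfl⟩ := List.mem_iff_getElem.mp hy
  refine ⟨0, k + 2, le_add_self, by simpa using hk, ?_⟩
  simp only [List.getD_cons_zero, List.getD_cons_succ, List.getD_eq_getElem _ _ hk]

theorem not_hasDistantInvDesc_append {u v : List ℕ} (hu : ¬HasDistantInvDesc u)
    (hv : ¬HasDistantInvDesc v) (huv : ∀ x ∈ u, ∀ y ∈ v, x < y) :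
    ¬HasDistantInvDesc (u ++ v) := by
  rintro ⟨j, k, hjk, hk, hjk_eq⟩
  rw [List.length_append] at hk
  by_cases hku : k < u.length
  · rw [List.getD_append _ _ _ _ (by omega), List.getD_append _ _ _ _ hku] at hjk_eq
    exact hu ⟨j, k, hjk, hku, hjk_eq⟩
  by_cases hju : j < u.length
  · rw [List.getD_append _ _ _ _ hju, List.getD_append_right _ _ _ _ (by omega),
      List.getD_eq_getElem _ _ hju, List.getD_eq_getElem _ _ (by omega)] at hjk_eq
    have hkv : k - u.length < v.length := by omega
    have := huv _ (List.getElem_mem hju) _ (List.getElem_mem hkv)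
    omega
  · rw [List.getD_append_right _ _ _ _ (by omega),
      List.getD_append_right _ _ _ _ (by omega)] at hjk_eq
    exact hv ⟨j - u.length, k - u.length, by omega, by omega, hjk_eq⟩

theorem not_hasDistantInvDesc_reverse_range' (s m : ℕ) :
    ¬HasDistantInvDesc (List.range' s m).reverse := by
  rintro ⟨j, k, hjk, hk, hjk_eq⟩
  simp only [List.length_reverse, List.length_range'] at hk
  rw [List.getD_eq_getElem _ _ (by simp; omega), List.getD_eq_getElem _ _ (by simpa)] at hjk_eq
  simp only [List.getElem_reverse, List.getElem_range', List.length_range'] at hjk_eq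
  omega

theorem layeredFrom_cons (a k : ℕ) (ks : List ℕ) :
    layeredFrom a (k :: ks) = (List.range' (a + 1) k).reverse ++ layeredFrom (a + k) ks := by
  rw [layeredFrom, List.reverse_range']
  congr 2
  funext i
  omega

theorem lt_of_mem_layeredFrom {a x : ℕ} {ls : List ℕ} (hx : x ∈ layeredFrom a ls) : a < x := by
  induction ls generalizing a with
  | nil => simp [layeredFrom] at hx
  | cons k ks ih =>
    rw [layeredFrom_cons, List.mem_append, List.mem_reverse, List.mem_range'_1] at hx
    rcases hx with hx | hx
    · omega
    · have := ih hx
      omega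

theorem not_hasDistantInvDesc_layeredFrom (a : ℕ) (ls : List ℕ) :
    ¬HasDistantInvDesc (layeredFrom a ls) := by
  induction ls generalizing a with
  | nil => rintro ⟨j, k, -, hk, -⟩; simp [layeredFrom] at hk
  | cons k ks ih =>
    rw [layeredFrom_cons]
    refine not_hasDistantInvDesc_append (not_hasDistantInvDesc_reverse_range' _ _) (ih _) ?_
    intro x hx y hy
    rw [List.mem_reverse, List.mem_range'_1] at hx
    have := lt_of_mem_layeredFrom hy
    omega

theorem IsPermWord.perm_range' {n : ℕ} {p : List ℕ} (h : IsPermWord n p) :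
    p.Perm (List.range' 1 n) := by
  obtain ⟨hlen, hnd, hbd⟩ := h
  refine (hnd.subperm fun x hx => ?_).perm_of_length_le (by simp [hlen])
  have := hbd x hx
  rw [List.mem_range'_1]
  omega

theorem exists_eq_reverse_range'_append (s m : ℕ) (t : List ℕ)
    (hmem : ∀ v, s ≤ v → v ≤ s + m → v ∈ (s + m) :: t)
    (h : ¬HasDistantInvDesc ((s + m) :: t)) :
    ∃ q, t = (List.range' s m).reverse ++ q := by
  induction m generalizing t with
  | zero => exact ⟨t, rfl⟩
  | succ m ih =>
    have hpred : s + m ∈ t := by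
      simpa using hmem (s + m) (by omega) (by omega)
    obtain ⟨x, t', rfl⟩ := List.exists_cons_of_ne_nil (List.ne_nil_of_mem hpred)
    obtain rfl : x = s + m := by
      by_contra hx
      have : s + m ∈ t' := by simpa [Ne.symm hx] using hpred
      exact h (hasDistantInvDesc_cons_cons_of_mem this)
    have hmem' : ∀ v, s ≤ v → v ≤ s + m → v ∈ (s + m) :: t' := by
      intro v hv₁ hv₂
      have hv : v ≠ s + (m + 1) := by omega
      simpa [hv] using hmem v hv₁ (by omega)
    obtain ⟨q, rfl⟩ := ih t' hmem' (fun h' => h (h'.append_left [s + (m + 1)]))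
    exact ⟨q, by simp [List.range'_concat]⟩

theorem exists_layeredFrom_eq_of_perm_range' (N a : ℕ) (p : List ℕ)
    (hp : p.Perm (List.range' (a + 1) N)) (h : ¬HasDistantInvDesc p) :
    ∃ ls, (∀ l ∈ ls, 0 < l) ∧ p = layeredFrom a ls := by
  induction N using Nat.strong_induction_on generalizing a p with
  | _ N ih =>
  rcases p with _ | ⟨x, t⟩
  · exact ⟨[], by simp, rfl⟩
  have hx := List.mem_range'_1.mp (hp.subset List.mem_cons_self)
  obtain ⟨m, rfl⟩ : ∃ m, x = a + 1 + m := ⟨x - (a + 1), by omega⟩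
  obtain ⟨r, rfl⟩ : ∃ r, N = m + 1 + r := ⟨N - (m + 1), by omega⟩
  obtain ⟨q, rfl⟩ := exists_eq_reverse_range'_append (a + 1) m t
    (fun v hv₁ hv₂ => hp.mem_iff.mpr (List.mem_range'_1.mpr ⟨hv₁, by omega⟩)) h
  have hlayer : (a + 1 + m) :: ((List.range' (a + 1) m).reverse ++ q) =
      (List.range' (a + 1) (m + 1)).reverse ++ q := by
    simp [List.range'_concat]
  rw [hlayer] at hp h ⊢
  have hsplit : List.range' (a + 1) (m + 1 + r) =
      List.range' (a + 1) (m + 1) ++ List.range' (a + (m + 1) + 1) r := by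
    rw [← List.range'_append, Nat.one_mul, Nat.add_right_comm]
  rw [hsplit] at hp
  have hq : q.Perm (List.range' (a + (m + 1) + 1) r) :=
    (List.perm_append_left_iff _).mp (((List.reverse_perm _).append_right q).symm.trans hp)
  obtain ⟨ls, hls, rfl⟩ := ih r (by omega) (a + (m + 1)) q hq
    (fun h' => h (h'.append_left _))
  exact ⟨(m + 1) :: ls, List.forall_mem_cons.mpr ⟨m.succ_pos, hls⟩, (layeredFrom_cons ..).symm⟩

theorem layered_iff_no_distant_inverse_descent (n : Nat) (p : List Nat)
    (hperm : IsPermWord n p) :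
    IsLayered p ↔ ¬ HasDistantInvDesc p := by
  constructor
  · rintro ⟨ls, -, rfl⟩
    exact not_hasDistantInvDesc_layeredFrom 0 ls
  · exact exists_layeredFrom_eq_of_perm_range' n 0 p hperm.perm_range'
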